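/- A transitive permutation 2-group G ≤ S_{2d} contains a transposition if and only if G is isomorphic as a permutation group to the wreath product C₂ ≀ H for some transitive permutation group H of degree d. -/

import Mathlib

private lemma zmod2_add_self (a : ZMod 2) : a + a = 0 := by
  fin_cases a <;> decide

/-- The element `x ⋊ s` of the wreath product `C₂ ≀ H`, realized as a permutation of
`ZMod 2 × B` (the set `{1,2} × B`): blocks are permuted by `s` and then the two points of the
block over `b` are swapped iff the coordinate `x b` is nonzero. -/
def wreathPerm {B : Type} (x : B → ZMod 2) (s : Equiv.Perm B) : Equiv.Perm (ZMod 2 × B) where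
  toFun p := (p.1 + x (s p.2), s p.2)
  invFun p := (p.1 + x p.2, s.symm p.2)
  left_inv p := by
    obtain ⟨i, b⟩ := p
    simp [add_assoc, zmod2_add_self]
  right_inv p := by
    obtain ⟨i, b⟩ := p
    simp [add_assoc, zmod2_add_self]

lemma wreathPerm_apply {B : Type} (x : B → ZMod 2) (s : Equiv.Perm B) (p : ZMod 2 × B) :
    wreathPerm x s p = (p.1 + x (s p.2), s p.2) := rfl

lemma wreathPerm_one {B : Type} : wreathPerm (fun _ : B => (0 : ZMod 2)) 1 = 1 := by
  apply Equiv.ext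
  intro p
  simp [wreathPerm_apply]

lemma wreathPerm_mul {B : Type} (x y : B → ZMod 2) (s t : Equiv.Perm B) :
    wreathPerm x s * wreathPerm y t
      = wreathPerm (fun c => x c + y (s⁻¹ c)) (s * t) := by
  apply Equiv.ext
  intro p
  simp [wreathPerm_apply, Equiv.Perm.mul_apply]
  ring

lemma wreathPerm_inv {B : Type} (x : B → ZMod 2) (s : Equiv.Perm B) :
    (wreathPerm x s)⁻¹ = wreathPerm (fun c => x (s c)) s⁻¹ := by
  apply inv_eq_of_mul_eq_one_right
  rw [wreathPerm_mul]
  have h1 : (fun c => x c + x (s (s⁻¹ c))) = fun _ : B => (0 : ZMod 2) := by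
    funext c
    simp [zmod2_add_self]
  rw [h1]
  rw [mul_inv_cancel]
  exact wreathPerm_one

/-! If `G` contains a transposition then, by transitivity, every point `a` lies in one, `(a σa)`.
The partner `σa` is unique, since two distinct transpositions sharing a point multiply to a
3-cycle, which cannot lie in a 2-group. So `σ` is a fixed-point-free involution commuting with `G`;
identifying `X` with `ZMod 2 × Fin d` so that `σ` becomes the flip of all blocks, every element of
`G` has the form `x ⋊ s`. The transpositions `(a σa)` generate the whole base group `(ZMod 2)^d`,
hence `G = C₂ ≀ H` for the group `H` of those `s` with `0 ⋊ s ∈ G`, transitive because `G` is.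
Conversely `C₂ ≀ H` contains the transposition of the two points of a block. -/

open Equiv Equiv.Perm

lemma ZMod.eq_zero_or_eq_one_of_two (i : ZMod 2) : i = 0 ∨ i = 1 := by
  revert i; decide

section Wreath

variable {B : Type}

lemma wreathPerm_one_one_apply (p : ZMod 2 × B) : wreathPerm 1 1 p = (p.1 + 1, p.2) := rfl

@[simps]
def wreathTopHom : Perm B →* Perm (ZMod 2 × B) where
  toFun := wreathPerm 0
  map_one' := wreathPerm_one
  map_mul' s t := by rw [wreathPerm_mul]; rfl

lemma wreathPerm_eq_mul_wreathTopHom (x : B → ZMod 2) (s : Perm B) :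
    wreathPerm x s = wreathPerm x 1 * wreathTopHom s := by
  rw [wreathTopHom_apply, wreathPerm_mul]
  simp

lemma wreathPerm_add_one (x y : B → ZMod 2) :
    wreathPerm (x + y) 1 = wreathPerm x 1 * wreathPerm y 1 := by
  rw [wreathPerm_mul]
  rfl

lemma wreathPerm_single_one_one [DecidableEq B] (b : B) :
    wreathPerm (Pi.single b 1) 1 = swap (0, b) (1, b) := by
  ext ⟨i, c⟩ : 1
  by_cases hc : c = b
  · subst hc
    obtain rfl | rfl := ZMod.eq_zero_or_eq_one_of_two i
    · simp [wreathPerm_apply]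
    · simp [wreathPerm_apply]
      decide
  · simp [wreathPerm_apply, hc, swap_apply_of_ne_of_ne]

lemma exists_eq_wreathPerm_of_commute {g : Perm (ZMod 2 × B)} (hg : Commute g (wreathPerm 1 1)) :
    ∃ x s, g = wreathPerm x s := by
  have hblock : ∀ h : Perm (ZMod 2 × B), Commute h (wreathPerm 1 1) →
      ∀ i b, h (i, b) = ((h (0, b)).1 + i, (h (0, b)).2) := by
    intro h hh i b
    obtain rfl | rfl := ZMod.eq_zero_or_eq_one_of_two i
    · simp
    · simpa [Perm.mul_apply, wreathPerm_one_one_apply] using congr($(hh.eq) (0, b))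
  have hsnd : ∀ h : Perm (ZMod 2 × B), Commute h (wreathPerm 1 1) →
      ∀ b, (h⁻¹ (0, (h (0, b)).2)).2 = b := by
    intro h hh b
    have := hblock h⁻¹ hh.inv_left (h (0, b)).1 (h (0, b)).2
    rw [Prod.mk.eta, Perm.coe_inv, symm_apply_apply] at this
    exact congr(Prod.snd $this).symm
  let s : Perm B :=
    { toFun b := (g (0, b)).2
      invFun b := (g⁻¹ (0, b)).2
      left_inv := hsnd g hg
      right_inv b := by simpa using hsnd g⁻¹ hg.inv_left b }
  refine ⟨fun c => (g (0, s.symm c)).1, s, Equiv.ext fun ⟨i, b⟩ => ?_⟩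
  rw [hblock g hg, wreathPerm_apply, symm_apply_apply, add_comm]
  rfl

lemma wreathPerm_mem_of_swap_mem [Finite B] [DecidableEq B] {K : Subgroup (Perm (ZMod 2 × B))}
    (hswap : ∀ b, swap (0, b) (1, b) ∈ K) (x : B → ZMod 2) : wreathPerm x 1 ∈ K := by
  refine Pi.single_induction (fun x => wreathPerm x 1 ∈ K) x ?_ ?_ ?_
  · exact wreathPerm_one ▸ K.one_mem
  · intro x y hx hy
    rw [wreathPerm_add_one]
    exact K.mul_mem hx hy
  · intro b m
    obtain rfl | rfl := ZMod.eq_zero_or_eq_one_of_two m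
    · simpa using wreathPerm_one ▸ K.one_mem
    · simpa [wreathPerm_single_one_one] using hswap b

theorem mem_iff_exists_wreathPerm [Finite B] [DecidableEq B] {K : Subgroup (Perm (ZMod 2 × B))}
    (hcomm : ∀ g ∈ K, Commute g (wreathPerm 1 1)) (hswap : ∀ b, swap (0, b) (1, b) ∈ K)
    (g : Perm (ZMod 2 × B)) :
    g ∈ K ↔ ∃ x s, s ∈ K.comap wreathTopHom ∧ g = wreathPerm x s := by
  have hbase := wreathPerm_mem_of_swap_mem hswap
  constructor
  · intro hg
    obtain ⟨x, s, rfl⟩ := exists_eq_wreathPerm_of_commute (hcomm g hg)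
    rw [wreathPerm_eq_mul_wreathTopHom] at hg
    exact ⟨x, s, (K.mul_mem_cancel_left (hbase x)).1 hg, rfl⟩
  · rintro ⟨x, s, hs, rfl⟩
    rw [wreathPerm_eq_mul_wreathTopHom]
    exact K.mul_mem (hbase x) hs

end Wreath

section Transpositions

variable {X : Type*} [DecidableEq X] {G : Subgroup (Perm X)}

lemma swap_apply_mem_of_swap_mem {g : Perm X} (hg : g ∈ G) {a b : X} (h : swap a b ∈ G) :
    swap (g a) (g b) ∈ G := by
  rw [Equiv.swap_apply_apply]
  exact G.mul_mem (G.mul_mem hg h) (G.inv_mem hg)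

lemma eq_of_swap_mem_of_isPGroup_two [Finite X] (hG : IsPGroup 2 G) {a b c : X} (hab : a ≠ b)
    (hac : a ≠ c) (hb : swap a b ∈ G) (hc : swap a c ∈ G) : b = c := by
  by_contra hbc
  cases nonempty_fintype X
  obtain ⟨k, hk⟩ := IsPGroup.iff_orderOf.mp hG ⟨_, G.mul_mem hb hc⟩
  rw [Subgroup.orderOf_mk, (isThreeCycle_swap_mul_swap_same hab hac hbc).orderOf] at hk
  cases k with
  | zero => norm_num at hk
  | succ k => rw [pow_succ] at hk; omega

lemma exists_swap_mem (htrans : ∀ a b : X, ∃ g ∈ G, g a = b) (hswap : ∃ τ ∈ G, τ.IsSwap)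
    (a : X) : ∃ b, a ≠ b ∧ swap a b ∈ G := by
  obtain ⟨τ, hτ, a₀, b₀, hne, rfl⟩ := hswap
  obtain ⟨g, hg, rfl⟩ := htrans a₀ a
  exact ⟨g b₀, g.injective.ne hne, swap_apply_mem_of_swap_mem hg hτ⟩

theorem exists_involutive_swap_mem [Finite X] (hG : IsPGroup 2 G)
    (htrans : ∀ a b : X, ∃ g ∈ G, g a = b) (hswap : ∃ τ ∈ G, τ.IsSwap) :
    ∃ σ : Perm X, Function.Involutive σ ∧ (∀ a, σ a ≠ a) ∧ (∀ a, swap a (σ a) ∈ G) ∧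
      ∀ g ∈ G, Commute g σ := by
  choose τ hτne hτG using exists_swap_mem htrans hswap
  have hτ : Function.Involutive τ := fun a =>
    eq_of_swap_mem_of_isPGroup_two hG (hτne (τ a)) (hτne a).symm (hτG (τ a))
      (swap_comm a (τ a) ▸ hτG a)
  refine ⟨hτ.toPerm τ, hτ, fun a => (hτne a).symm, hτG, fun g hg => Equiv.ext fun a => ?_⟩
  exact eq_of_swap_mem_of_isPGroup_two hG (g.injective.ne (hτne a)) (hτne (g a))
    (swap_apply_mem_of_swap_mem hg (hτG a)) (hτG (g a))

end Transpositions

section Pairing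

variable {X : Type} {σ : Perm X}

def pairEquiv (hσ : Function.Involutive σ) (R : Set X) [DecidablePred (· ∈ R)]
    (hR : ∀ a, σ a ∈ R ↔ a ∉ R) : X ≃ ZMod 2 × R where
  toFun a := if h : a ∈ R then (0, ⟨a, h⟩) else (1, ⟨σ a, (hR a).2 h⟩)
  invFun p := if p.1 = 0 then p.2 else σ p.2
  left_inv a := by by_cases h : a ∈ R <;> simp [h, hσ a]
  right_inv := by
    rintro ⟨i, b, hb⟩
    have hσb : σ b ∉ R := fun h => (hR b).1 h hb
    obtain rfl | rfl := ZMod.eq_zero_or_eq_one_of_two i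
    · simp [hb]
    · simp [hσb, hσ b]

lemma pairEquiv_apply_perm (hσ : Function.Involutive σ) (R : Set X) [DecidablePred (· ∈ R)]
    (hR : ∀ a, σ a ∈ R ↔ a ∉ R) (a : X) :
    pairEquiv hσ R hR (σ a) = wreathPerm 1 1 (pairEquiv hσ R hR a) := by
  by_cases h : a ∈ R
  · have hσa : σ a ∉ R := fun h' => (hR a).1 h' h
    simp [pairEquiv, wreathPerm_one_one_apply, h, hσa, hσ a]
  · simp [pairEquiv, wreathPerm_one_one_apply, h, (hR a).2 h]
    decide

theorem exists_equiv_zmod_two_prod_fin [Fintype X] (hσ : Function.Involutive σ)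
    (hfree : ∀ a, σ a ≠ a) {d : ℕ} (hX : Fintype.card X = 2 * d) :
    ∃ e : X ≃ ZMod 2 × Fin d, e.permCongr σ = wreathPerm 1 1 := by
  classical
  let _ : LinearOrder X := LinearOrder.lift' _ (Fintype.equivFin X).injective
  let R : Set X := {a | a < σ a}
  have hR : ∀ a, σ a ∈ R ↔ a ∉ R := fun a => by
    simp only [R, Set.mem_ofPred_eq, hσ a, not_lt]
    exact ⟨le_of_lt, fun h => lt_of_le_of_ne h (hfree a)⟩
  let f := pairEquiv hσ R hR
  have hcard : Fintype.card R = d := by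
    have := Fintype.card_congr f
    rw [Fintype.card_prod, ZMod.card] at this
    omega
  let e := f.trans ((Equiv.refl _).prodCongr (Fintype.equivFinOfCardEq hcard))
  refine ⟨e, Equiv.ext fun p => ?_⟩
  obtain ⟨a, rfl⟩ := e.surjective p
  simp [e, f, pairEquiv_apply_perm, wreathPerm_one_one_apply]

end Pairing

/-- A transitive permutation 2-group `G ≤ S_{2d}` contains a transposition iff it is
permutation-isomorphic to a wreath product `C₂ ≀ H` for a transitive permutation group `H` of
degree `d`. -/
theorem transitive_two_group_has_transposition_iff_wreath
    {X : Type} [Fintype X] [DecidableEq X]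
    (d : ℕ) (hd : 0 < d) (hX : Fintype.card X = 2 * d)
    (G : Subgroup (Equiv.Perm X)) (hG2 : IsPGroup 2 G)
    (htrans : ∀ a b : X, ∃ g ∈ G, g a = b) :
    (∃ g ∈ G, Equiv.Perm.IsSwap g) ↔
      ∃ (H : Subgroup (Equiv.Perm (Fin d))) (e : X ≃ ZMod 2 × Fin d),
        (∀ a b : Fin d, ∃ s ∈ H, s a = b) ∧
        (∀ g : Equiv.Perm X, g ∈ G ↔
          ∃ (x : Fin d → ZMod 2) (s : Equiv.Perm (Fin d)),
            s ∈ H ∧ e.permCongr g = wreathPerm x s) := by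
  constructor
  · intro hswap
    obtain ⟨σ, hσ, hfree, hσG, hGσ⟩ := exists_involutive_swap_mem hG2 htrans hswap
    obtain ⟨e, he⟩ := exists_equiv_zmod_two_prod_fin hσ hfree hX
    let K := G.map e.permCongrHom.toMonoidHom
    have hmemK (g : Perm X) : e.permCongr g ∈ K ↔ g ∈ G := by simp [K]
    have hcomm : ∀ q ∈ K, Commute q (wreathPerm 1 1) := by
      rintro _ ⟨g, hg, rfl⟩
      exact he ▸ (hGσ g hg).map e.permCongrHom
    have hblock (b : Fin d) : swap (0, b) (1, b) ∈ K := by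
      have hσb : e (σ (e.symm (0, b))) = (1, b) := by
        simpa [wreathPerm_one_one_apply] using congr($he (0, b))
      simpa [hmemK, permCongr_def, hσb] using (hmemK _).2 (hσG (e.symm (0, b)))
    have hmem (g : Perm X) := (hmemK g).symm.trans (mem_iff_exists_wreathPerm hcomm hblock _)
    refine ⟨K.comap wreathTopHom, e, fun b c => ?_, hmem⟩
    obtain ⟨g, hg, hgbc⟩ := htrans (e.symm (0, b)) (e.symm (0, c))
    obtain ⟨x, s, hs, hxs⟩ := (hmem g).1 hg
    refine ⟨s, hs, ?_⟩
    simpa [hgbc, wreathPerm_apply] using congr(Prod.snd ($hxs (0, b))).symm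
  · rintro ⟨H, e, -, hmem⟩
    let b : Fin d := ⟨0, hd⟩
    refine ⟨swap (e.symm (0, b)) (e.symm (1, b)), (hmem _).2 ⟨Pi.single b 1, 1, H.one_mem, ?_⟩,
      _, _, e.symm.injective.ne (by simp), rfl⟩
    rw [wreathPerm_single_one_one, permCongr_def, symm_trans_swap_trans]
    simp
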